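/- Let φ : [0,∞) → ℝ be convex with continuous derivative φ', and let F̆₁, F̆₂ : (0,1) → [0,∞) be measurable with ∫₀¹ B_φ(F̆₁(t), F̆₂(t)) dt < ∞. Define 𝔅_{φ̃}(F̆₁, F̆₂; α) := ∫₀¹ B_{φ̃}(F̆₁(t), F̆₂(t); α) dt for α > 0, where φ̃(·; α) is the Bregman generator with threshold α. Then α ↦ 𝔅_{φ̃}(F̆₁, F̆₂; α) is non-decreasing on (0,∞), lim_{α→0⁺} 𝔅_{φ̃}(F̆₁, F̆₂; α) = 0, and lim_{α→∞} 𝔅_{φ̃}(F̆₁, F̆₂; α) = ∫₀¹ B_φ(F̆₁(t), F̆₂(t)) dt. -/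

import Mathlib

/-- The Bregman divergence with generator `ψ` whose derivative is `ψ'`. -/
noncomputable def bregmanD (ψ ψ' : ℝ → ℝ) (z₁ z₂ : ℝ) : ℝ :=
  ψ z₁ - ψ z₂ - ψ' z₂ * (z₁ - z₂)

/-- The Bregman generator with threshold `α`, with derivative `x ↦ φ'(min(x,α))`. -/
noncomputable def phiTilde (φ φ' : ℝ → ℝ) (α : ℝ) (x : ℝ) : ℝ :=
  if x ≤ α then φ x else φ α + φ' α * (x - α)

/-! The thresholded divergence has the closed form
`B_φ(z₁ ∧ α, z₂ ∧ α) + (φ'(α) - φ'(z₂ ∧ α)) (z₁ - z₁ ∧ α)`. By the three-point identity it is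
at most `B_φ(z₁, z₂)`, it equals `B_φ(z₁, z₂)` once `α ≥ max z₁ z₂`, and it tends to `0` as
`α → 0⁺` by continuity of `φ` and `φ'` at `0`. Thresholding at `α ≤ β` factors through
thresholding at `β`, so the bound `≤ B_φ` applied to the generator `φ̃(·; β)` gives monotonicity
in `α`. Both limits then follow by dominated convergence, dominated by `B_φ(F̆₁, F̆₂)`. -/

open Set Filter Topology MeasureTheory

section Bregman

variable {ψ ψ' : ℝ → ℝ}

@[simp]
lemma bregmanD_self (z : ℝ) : bregmanD ψ ψ' z z = 0 := by
  simp [bregmanD]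

lemma bregmanD_three_point (z₁ z₂ a : ℝ) :
    bregmanD ψ ψ' z₁ z₂ =
      bregmanD ψ ψ' a z₂ + bregmanD ψ ψ' z₁ a + (ψ' a - ψ' z₂) * (z₁ - a) := by
  unfold bregmanD; ring

lemma ConvexOn.bregmanD_nonneg {S : Set ℝ} (hψ : ConvexOn ℝ S ψ)
    (hderiv : ∀ x ∈ S, HasDerivWithinAt ψ (ψ' x) S x) {z₁ z₂ : ℝ} (h₁ : z₁ ∈ S) (h₂ : z₂ ∈ S) :
    0 ≤ bregmanD ψ ψ' z₁ z₂ := by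
  unfold bregmanD
  rcases lt_trichotomy z₁ z₂ with h | rfl | h
  · have := hψ.slope_le_of_hasDerivWithinAt h₁ h₂ h (hderiv z₂ h₂)
    rw [slope_def_field, div_le_iff₀ (sub_pos.2 h)] at this
    linarith
  · simp
  · have := hψ.le_slope_of_hasDerivWithinAt h₂ h₁ h (hderiv z₂ h₂)
    rw [slope_def_field, le_div_iff₀ (sub_pos.2 h)] at this
    linarith

lemma monotoneOn_of_bregmanD_nonneg
    (hB : ∀ a b, 0 ≤ a → 0 ≤ b → 0 ≤ bregmanD ψ ψ' a b) : MonotoneOn ψ' (Ici 0) := by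
  intro a ha b hb hab
  rcases hab.eq_or_lt with rfl | hab
  · rfl
  have hsum : bregmanD ψ ψ' a b + bregmanD ψ ψ' b a = (ψ' b - ψ' a) * (b - a) := by
    unfold bregmanD; ring
  have := hB a b ha hb
  have := hB b a hb ha
  nlinarith [sub_pos.2 hab]

end Bregman

section Threshold

variable {φ φ' : ℝ → ℝ}

lemma phiTilde_eq (α x : ℝ) : phiTilde φ φ' α x = φ (min x α) + φ' α * (x - min x α) := by
  unfold phiTilde
  split_ifs with h
  · simp [min_eq_left h]
  · rw [min_eq_right (le_of_not_ge h)]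

lemma bregmanD_phiTilde (α z₁ z₂ : ℝ) :
    bregmanD (phiTilde φ φ' α) (fun x => φ' (min x α)) z₁ z₂ =
      bregmanD φ φ' (min z₁ α) (min z₂ α) + (φ' α - φ' (min z₂ α)) * (z₁ - min z₁ α) := by
  have hz₂ : (φ' α - φ' (min z₂ α)) * (z₂ - min z₂ α) = 0 := by
    rcases le_total z₂ α with h | h
    · simp [min_eq_left h]
    · simp [min_eq_right h]
  simp only [bregmanD, phiTilde_eq]
  linear_combination -hz₂

lemma bregmanD_phiTilde_of_le {α z₁ z₂ : ℝ} (h₁ : z₁ ≤ α) (h₂ : z₂ ≤ α) :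
    bregmanD (phiTilde φ φ' α) (fun x => φ' (min x α)) z₁ z₂ = bregmanD φ φ' z₁ z₂ := by
  simp [bregmanD_phiTilde, min_eq_left h₁, min_eq_left h₂]

lemma phiTilde_phiTilde {α β : ℝ} (h : α ≤ β) :
    phiTilde (phiTilde φ φ' β) (fun x => φ' (min x β)) α = phiTilde φ φ' α := by
  ext x
  simp only [phiTilde_eq, min_eq_left ((min_le_right x α).trans h), min_eq_left h, sub_self,
    mul_zero, add_zero]

lemma bregmanD_phiTilde_nonneg (hB : ∀ a b, 0 ≤ a → 0 ≤ b → 0 ≤ bregmanD φ φ' a b)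
    {α z₁ z₂ : ℝ} (hα : 0 ≤ α) (h₁ : 0 ≤ z₁) (h₂ : 0 ≤ z₂) :
    0 ≤ bregmanD (phiTilde φ φ' α) (fun x => φ' (min x α)) z₁ z₂ := by
  rw [bregmanD_phiTilde]
  have hm₂ : 0 ≤ min z₂ α := le_min h₂ hα
  have hslope : φ' (min z₂ α) ≤ φ' α :=
    monotoneOn_of_bregmanD_nonneg hB hm₂ hα (min_le_right z₂ α)
  have := hB _ _ (le_min h₁ hα) hm₂
  nlinarith [min_le_left z₁ α]

lemma bregmanD_phiTilde_le (hB : ∀ a b, 0 ≤ a → 0 ≤ b → 0 ≤ bregmanD φ φ' a b)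
    {α z₁ z₂ : ℝ} (h₁ : 0 ≤ z₁) (h₂ : 0 ≤ z₂) :
    bregmanD (phiTilde φ φ' α) (fun x => φ' (min x α)) z₁ z₂ ≤ bregmanD φ φ' z₁ z₂ := by
  rw [bregmanD_phiTilde]
  rcases le_total z₂ α with h₂α | h₂α
  · have hα : 0 ≤ α := h₂.trans h₂α
    have hm₁ : (φ' (min z₁ α) - φ' α) * (z₁ - min z₁ α) = 0 := by
      rcases le_total z₁ α with h | h
      · simp [min_eq_left h]
      · simp [min_eq_right h]
    have := bregmanD_three_point (ψ := φ) (ψ' := φ') z₁ z₂ (min z₁ α)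
    have := hB _ _ h₁ (le_min h₁ hα)
    rw [min_eq_left h₂α]
    linarith
  · rw [min_eq_right h₂α]
    rcases le_total z₁ α with h₁α | h₁α
    · have hα : 0 ≤ α := h₁.trans h₁α
      have hslope := monotoneOn_of_bregmanD_nonneg hB hα h₂ h₂α
      have := bregmanD_three_point (ψ := φ) (ψ' := φ') z₁ z₂ α
      have := hB _ _ hα h₂
      rw [min_eq_left h₁α]
      nlinarith
    · simpa [min_eq_right h₁α] using hB _ _ h₁ h₂

lemma bregmanD_phiTilde_mono (hB : ∀ a b, 0 ≤ a → 0 ≤ b → 0 ≤ bregmanD φ φ' a b)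
    {α β z₁ z₂ : ℝ} (hα : 0 ≤ α) (hαβ : α ≤ β) (h₁ : 0 ≤ z₁) (h₂ : 0 ≤ z₂) :
    bregmanD (phiTilde φ φ' α) (fun x => φ' (min x α)) z₁ z₂ ≤
      bregmanD (phiTilde φ φ' β) (fun x => φ' (min x β)) z₁ z₂ := by
  have hderiv : (fun x => φ' (min x α)) = fun x => φ' (min (min x α) β) := by
    ext x; rw [min_eq_left ((min_le_right x α).trans hαβ)]
  rw [← phiTilde_phiTilde (φ := φ) (φ' := φ') hαβ, hderiv]
  exact bregmanD_phiTilde_le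
    (fun a b ha hb => bregmanD_phiTilde_nonneg hB (hα.trans hαβ) ha hb) h₁ h₂

end Threshold

section Measurability

variable {Ω : Type*} [MeasurableSpace Ω] {μ : Measure Ω}

lemma ContinuousOn.aemeasurable_comp {β γ : Type*} [TopologicalSpace β] [MeasurableSpace β]
    [OpensMeasurableSpace β] [TopologicalSpace γ] [MeasurableSpace γ] [BorelSpace γ]
    {g : β → γ} {F : Ω → β} {s : Set β} (hg : ContinuousOn g s) (hs : MeasurableSet s)
    (hF : AEMeasurable F μ) (hFs : ∀ᵐ t ∂μ, F t ∈ s) : AEMeasurable (fun t => g (F t)) μ := by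
  have hrestrict : (μ.map F).restrict s = μ.map F :=
    Measure.restrict_eq_self_of_ae_mem ((ae_map_iff hF hs).2 hFs)
  exact (hrestrict ▸ hg.aemeasurable hs).comp_aemeasurable hF

lemma aemeasurable_bregmanD_comp {ψ ψ' : ℝ → ℝ} {s : Set ℝ} (hs : MeasurableSet s)
    (hψ : ContinuousOn ψ s) (hψ' : ContinuousOn ψ' s) {F₁ F₂ : Ω → ℝ}
    (hF₁ : AEMeasurable F₁ μ) (hF₂ : AEMeasurable F₂ μ)
    (h₁ : ∀ᵐ t ∂μ, F₁ t ∈ s) (h₂ : ∀ᵐ t ∂μ, F₂ t ∈ s) :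
    AEMeasurable (fun t => bregmanD ψ ψ' (F₁ t) (F₂ t)) μ :=
  ((hψ.aemeasurable_comp hs hF₁ h₁).sub (hψ.aemeasurable_comp hs hF₂ h₂)).sub
    ((hψ'.aemeasurable_comp hs hF₂ h₂).mul (hF₁.sub hF₂))

end Measurability

section Limits

variable {φ φ' : ℝ → ℝ}

lemma continuousOn_phiTilde (hφ : ContinuousOn φ (Ici 0)) {α : ℝ} (hα : 0 ≤ α) :
    ContinuousOn (phiTilde φ φ' α) (Ici 0) := by
  have hmin : ContinuousOn (fun x : ℝ => min x α) (Ici 0) := by fun_prop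
  rw [show phiTilde φ φ' α = _ from funext (phiTilde_eq α)]
  exact (hφ.comp hmin fun x hx => le_min hx hα).add
    (continuousOn_const.mul (continuousOn_id.sub hmin))

lemma tendsto_bregmanD_phiTilde_nhdsGT_zero (hφ : ContinuousWithinAt φ (Ici 0) 0)
    (hφ' : ContinuousWithinAt φ' (Ici 0) 0) {z₁ z₂ : ℝ} (h₁ : 0 ≤ z₁) (h₂ : 0 ≤ z₂) :
    Tendsto (fun α => bregmanD (phiTilde φ φ' α) (fun x => φ' (min x α)) z₁ z₂) (𝓝[>] 0)
      (𝓝 0) := by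
  have hmin : ∀ z : ℝ, 0 ≤ z → Tendsto (fun α => min z α) (𝓝[>] 0) (𝓝[Ici 0] 0) := by
    intro z hz
    refine tendsto_nhdsWithin_iff.2
      ⟨?_, eventually_nhdsWithin_of_forall fun α hα => le_min hz hα.le⟩
    have hcont : Continuous fun α : ℝ => min z α := by fun_prop
    simpa [min_eq_right hz] using (hcont.tendsto 0).mono_left nhdsWithin_le_nhds
  have hid : Tendsto (fun α : ℝ => α) (𝓝[>] 0) (𝓝[Ici 0] 0) :=
    tendsto_nhdsWithin_mono_right Ioi_subset_Ici_self tendsto_id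
  have hbreg : Tendsto (fun α => bregmanD φ φ' (min z₁ α) (min z₂ α)) (𝓝[>] 0)
      (𝓝 (bregmanD φ φ' 0 0)) :=
    ((hφ.tendsto.comp (hmin z₁ h₁)).sub (hφ.tendsto.comp (hmin z₂ h₂))).sub
      ((hφ'.tendsto.comp (hmin z₂ h₂)).mul
        (((hmin z₁ h₁).mono_right nhdsWithin_le_nhds).sub
          ((hmin z₂ h₂).mono_right nhdsWithin_le_nhds)))
  have hslope : Tendsto (fun α => φ' α - φ' (min z₂ α)) (𝓝[>] 0) (𝓝 (φ' 0 - φ' 0)) :=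
    (hφ'.tendsto.comp hid).sub (hφ'.tendsto.comp (hmin z₂ h₂))
  simpa [bregmanD_phiTilde] using
    hbreg.add (hslope.mul (tendsto_const_nhds.sub ((hmin z₁ h₁).mono_right nhdsWithin_le_nhds)))

lemma tendsto_lintegral_bregmanD_phiTilde {Ω : Type*} [MeasurableSpace Ω] {μ : Measure Ω}
    {l : Filter ℝ} [l.IsCountablyGenerated] (hl : ∀ᶠ α in l, 0 ≤ α)
    (hB : ∀ a b, 0 ≤ a → 0 ≤ b → 0 ≤ bregmanD φ φ' a b)
    (hφ : ContinuousOn φ (Ici 0)) (hφ' : ContinuousOn φ' (Ici 0)) {F₁ F₂ : Ω → ℝ}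
    (hF₁ : AEMeasurable F₁ μ) (hF₂ : AEMeasurable F₂ μ)
    (h₁ : ∀ᵐ t ∂μ, 0 ≤ F₁ t) (h₂ : ∀ᵐ t ∂μ, 0 ≤ F₂ t)
    (hfin : ∫⁻ t, ENNReal.ofReal (bregmanD φ φ' (F₁ t) (F₂ t)) ∂μ ≠ ⊤) {g : Ω → ℝ}
    (hlim : ∀ᵐ t ∂μ,
      Tendsto (fun α => bregmanD (phiTilde φ φ' α) (fun x => φ' (min x α)) (F₁ t) (F₂ t)) l
        (𝓝 (g t))) :
    Tendsto (fun α => ∫⁻ t,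
        ENNReal.ofReal (bregmanD (phiTilde φ φ' α) (fun x => φ' (min x α)) (F₁ t) (F₂ t)) ∂μ) l
      (𝓝 (∫⁻ t, ENNReal.ofReal (g t) ∂μ)) := by
  refine tendsto_lintegral_filter_of_dominated_convergence' _ ?_ ?_ hfin ?_
  · filter_upwards [hl] with α hα
    have hφ'α : ContinuousOn (fun x => φ' (min x α)) (Ici 0) :=
      hφ'.comp (by fun_prop) fun x hx => le_min hx hα
    exact (aemeasurable_bregmanD_comp measurableSet_Ici (continuousOn_phiTilde hφ hα) hφ'α
      hF₁ hF₂ h₁ h₂).ennreal_ofReal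
  · refine Eventually.of_forall fun α => ?_
    filter_upwards [h₁, h₂] with t ht₁ ht₂
    exact ENNReal.ofReal_le_ofReal (bregmanD_phiTilde_le hB ht₁ ht₂)
  · filter_upwards [hlim] with t ht
    exact (ENNReal.continuous_ofReal.tendsto _).comp ht

end Limits

/-- For a convex, continuously differentiable generator `φ : [0,∞) → ℝ` and measurable
`F̆₁, F̆₂ : (0,1) → [0,∞)` with finite Bregman–Wasserstein divergence, the threshold
Bregman–Wasserstein divergence `𝔅_{φ̃}(F̆₁, F̆₂; α) = ∫₀¹ B_{φ̃}(F̆₁(t), F̆₂(t); α) dt`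
is non-decreasing in `α` on `(0,∞)`, tends to `0` as `α → 0⁺`, and tends to
`∫₀¹ B_φ(F̆₁(t), F̆₂(t)) dt` as `α → ∞`. -/
theorem bw_phiTilde_monotone_and_limits
    (φ φ' : ℝ → ℝ) (hconv : ConvexOn ℝ (Set.Ici 0) φ)
    (hderiv : ∀ x ∈ Set.Ici (0:ℝ), HasDerivWithinAt φ (φ' x) (Set.Ici 0) x)
    (hcont : ContinuousOn φ' (Set.Ici 0))
    (F₁ F₂ : ℝ → ℝ) (hF₁ : Measurable F₁) (hF₂ : Measurable F₂)
    (hF₁0 : ∀ t ∈ Set.Ioo (0:ℝ) 1, 0 ≤ F₁ t) (hF₂0 : ∀ t ∈ Set.Ioo (0:ℝ) 1, 0 ≤ F₂ t)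
    (hfin : (∫⁻ t in Set.Ioo (0:ℝ) 1,
        ENNReal.ofReal (bregmanD φ φ' (F₁ t) (F₂ t))) ≠ ⊤) :
    MonotoneOn (fun α => ∫⁻ t in Set.Ioo (0:ℝ) 1,
        ENNReal.ofReal (bregmanD (phiTilde φ φ' α) (fun x => φ' (min x α)) (F₁ t) (F₂ t)))
      (Set.Ioi 0) ∧
    Filter.Tendsto (fun α => ∫⁻ t in Set.Ioo (0:ℝ) 1,
        ENNReal.ofReal (bregmanD (phiTilde φ φ' α) (fun x => φ' (min x α)) (F₁ t) (F₂ t)))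
      (nhdsWithin 0 (Set.Ioi 0)) (nhds 0) ∧
    Filter.Tendsto (fun α => ∫⁻ t in Set.Ioo (0:ℝ) 1,
        ENNReal.ofReal (bregmanD (phiTilde φ φ' α) (fun x => φ' (min x α)) (F₁ t) (F₂ t)))
      Filter.atTop
      (nhds (∫⁻ t in Set.Ioo (0:ℝ) 1, ENNReal.ofReal (bregmanD φ φ' (F₁ t) (F₂ t)))) := by
  have hB : ∀ a b, 0 ≤ a → 0 ≤ b → 0 ≤ bregmanD φ φ' a b :=
    fun _ _ ha hb => hconv.bregmanD_nonneg hderiv ha hb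
  have hφ : ContinuousOn φ (Ici 0) := fun x hx => (hderiv x hx).continuousWithinAt
  have h₁ := ae_restrict_of_forall_mem (μ := volume) measurableSet_Ioo hF₁0
  have h₂ := ae_restrict_of_forall_mem (μ := volume) measurableSet_Ioo hF₂0
  refine ⟨fun α hα β _ hαβ => setLIntegral_mono' measurableSet_Ioo fun t ht =>
    ENNReal.ofReal_le_ofReal (bregmanD_phiTilde_mono hB (le_of_lt hα) hαβ (hF₁0 t ht) (hF₂0 t ht)),
    ?_, ?_⟩
  · have hlim := tendsto_lintegral_bregmanD_phiTilde (l := 𝓝[>] 0)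
      (eventually_nhdsWithin_of_forall fun _ hα => le_of_lt hα) hB hφ hcont hF₁.aemeasurable
      hF₂.aemeasurable h₁ h₂ hfin (g := 0) <| by
        filter_upwards [h₁, h₂] with t ht₁ ht₂
        exact tendsto_bregmanD_phiTilde_nhdsGT_zero (hφ 0 self_mem_Ici) (hcont 0 self_mem_Ici)
          ht₁ ht₂
    simpa using hlim
  · refine tendsto_lintegral_bregmanD_phiTilde (eventually_ge_atTop 0) hB hφ hcont
      hF₁.aemeasurable hF₂.aemeasurable h₁ h₂ hfin (ae_of_all _ fun t => ?_)
    refine tendsto_const_nhds.congr' ?_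
    filter_upwards [eventually_ge_atTop (max (F₁ t) (F₂ t))] with α hα
    exact (bregmanD_phiTilde_of_le (le_of_max_le_left hα) (le_of_max_le_right hα)).symm
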